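/- Let V and W be vector spaces, π : V → W a surjective linear map, α : W → K a nonzero linear functional with kernel ξ ⊂ W, ω : W × W → K an alternating form non-degenerate on ξ, and let f ∈ K be nonzero. Define λ on V ⊕ K by λ(v,t) = f·α(π v) and Ω((v,t),(v',t')) = t'·α(π v) − t·α(π v') + f·ω(π v, π v'). If V = W (π = id) then Ω is non-degenerate on W ⊕ K. -/
import Mathlib


/-- The linear-algebra heart of the symplectification non-degeneracy: given a nonzero
functional `α : W → K` with kernel `ξ`, an alternating form `ω` non-degenerate on `ξ`, and a
nonzero scalar `f`, the form `Ω((v,t),(v',t')) = t'·α(v) − t·α(v') + f·ω(v,v')` on `W ⊕ K`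
(here `V = W`, `π = id`, and `λ(v,t) = f·α(v)`) is non-degenerate. -/
theorem symplectification_nondegenerate (K W : Type) [Field K]
    [AddCommGroup W] [Module K W]
    (α : W →ₗ[K] K) (hα : α ≠ 0)
    (ω : W →ₗ[K] W →ₗ[K] K) (halt : ∀ v : W, ω v v = 0)
    (hnd : ∀ v ∈ LinearMap.ker α, v ≠ 0 → ∃ w ∈ LinearMap.ker α, ω v w ≠ 0)
    (f : K) (hf : f ≠ 0)
    (lam : W × K → K) (hlam : ∀ p : W × K, lam p = f * α p.1)
    (Ω : W × K → W × K → K)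
    (hΩ : ∀ p q : W × K, Ω p q = q.2 * α p.1 - p.2 * α q.1 + f * ω p.1 q.1) :
    ∀ p : W × K, p ≠ 0 → ∃ q : W × K, Ω p q ≠ 0 := by
  rintro ⟨v, t⟩ hp
  by_cases hav : α v = 0
  · by_cases hv : v = 0
    · -- then t ≠ 0; pick r with α r ≠ 0
      have ht : t ≠ 0 := by
        intro h; apply hp; simp [hv, h, Prod.ext_iff]
      obtain ⟨r, hr⟩ : ∃ r, α r ≠ 0 := by
        by_contra h
        push_neg at h
        exact hα (LinearMap.ext fun x => by simpa using h x)
      refine ⟨(r, 0), ?_⟩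
      rw [hΩ]
      simp [hv, hr, ht]
    · obtain ⟨w, hw, hωw⟩ := hnd v (by simpa [LinearMap.mem_ker] using hav) hv
      refine ⟨(w, 0), ?_⟩
      rw [hΩ]
      simp only [LinearMap.mem_ker] at hw
      simp [hav, hw, hf, hωw]
  · refine ⟨(0, 1), ?_⟩
    rw [hΩ]
    simpa using hav
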